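/- arXiv:1403.3442 — 2 statements merged into one kernel-verified Lean document; each statement's English description precedes it below -/
import Mathlib

section
/- Let Ω ⊂ ℝ³ be a bounded open set. There exists a constant C_DSG > 0, depending only on Ω, such that for every continuously differentiable vector field u : ℝ³ → ℝ³ with compact support contained in Ω one has ∫_Ω ‖∇u(x)‖² dx ≤ C_DSG · ∫_Ω ‖dev sym ∇u(x)‖² dx. -/
open MeasureTheory

noncomputable section

/-- Points of ℝ³. -/
abbrev R3 : Type := Fin 3 → ℝ
/-- 3×3 real matrices (as functions). -/
abbrev M3 : Type := Fin 3 → Fin 3 → ℝ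

/-- Frobenius inner product ⟨X,Y⟩ = tr(X Yᵀ) = ∑ᵢⱼ Xᵢⱼ Yᵢⱼ. -/
def finner (X Y : M3) : ℝ := ∑ i, ∑ j, X i j * Y i j

/-- Squared Frobenius norm ‖X‖². -/
def fnormSq (X : M3) : ℝ := finner X X

/-- Matrix trace. -/
def trM (X : M3) : ℝ := ∑ i, X i i

/-- Matrix transpose. -/
def transp (X : M3) : M3 := fun i j => X j i

/-- Symmetric part sym X = (X + Xᵀ)/2. -/
def symMat (X : M3) : M3 := fun i j => (X i j + X j i) / 2

/-- Skew-symmetric part skew X = (X − Xᵀ)/2. -/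
def skeww (X : M3) : M3 := fun i j => (X i j - X j i) / 2

/-- 3×3 identity matrix. -/
def idM : M3 := fun i j => if i = j then 1 else 0

/-- Deviatoric (trace-free) part dev X = X − (tr X / 3)·𝟙. -/
def devv (X : M3) : M3 := fun i j => X i j - (trM X / 3) * idM i j

/-- X is a symmetric matrix. -/
def isSymmM (X : M3) : Prop := ∀ i j, X i j = X j i

/-- Partial derivative ∂ⱼ f (x). -/
def pd (j : Fin 3) (f : R3 → ℝ) (x : R3) : ℝ := fderiv ℝ f x (Pi.single j 1)

/-- curl v = (∂₂v₃ − ∂₃v₂, ∂₃v₁ − ∂₁v₃, ∂₁v₂ − ∂₂v₁) (0-based indices). -/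
def curlV (v : R3 → R3) (x : R3) : R3 :=
  ![pd 1 (fun y => v y 2) x - pd 2 (fun y => v y 1) x,
    pd 2 (fun y => v y 0) x - pd 0 (fun y => v y 2) x,
    pd 0 (fun y => v y 1) x - pd 1 (fun y => v y 0) x]

/-- Row-wise Curl of a matrix field: the i-th row of Curl P is curl of the i-th row of P. -/
def CurlM (P : R3 → M3) (x : R3) : M3 := fun i => curlV (fun y => P y i) x

/-- Jacobian matrix (∇u)ᵢⱼ = ∂ⱼ uᵢ. -/
def jac (u : R3 → R3) (x : R3) : M3 := fun i j => pd j (fun y => u y i) x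

/-! Pointwise, `‖X‖² = 2‖dev sym X‖² - (tr X)²/3 + ((tr X)² - ⟨X, Xᵀ⟩)`. For `X = ∇u` with `u`
compactly supported the last bracket integrates to zero, because `∫ ∂ᵢuᵢ ∂ⱼuⱼ = ∫ ∂ⱼuᵢ ∂ᵢuⱼ`;
hence the inequality holds with `C = 2`. For `C¹` fields this symmetry cannot be obtained by
integrating by parts twice. Instead it is proved for difference quotients, where it is an identity
between translates (Lebesgue measure is translation invariant), and passed to the limit by
dominated convergence. -/

open Filter Topology Metric

section DifferenceQuotient

variable {E : Type*} [NormedAddCommGroup E] [NormedSpace ℝ E]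

def diffQuot (g : E → ℝ) (v : E) (t : ℝ) (x : E) : ℝ := (g (x + t • v) - g x) / t

theorem tendsto_diffQuot {g : E → ℝ} {x : E} (hg : DifferentiableAt ℝ g x) (v : E) :
    Tendsto (fun t => diffQuot g v t x) (𝓝[≠] 0) (𝓝 (fderiv ℝ g x v)) := by
  have hline : HasDerivAt (fun s : ℝ => g (x + s • v)) (fderiv ℝ g x v) 0 := by
    have h := hg.hasFDerivAt.comp_hasDerivAt_of_eq (0 : ℝ)
      (((hasDerivAt_id (0 : ℝ)).smul_const v).const_add x) (by simp)
    simpa [Function.comp_def] using h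
  refine (hasDerivAt_iff_tendsto_slope.mp hline).congr fun t => ?_
  simp [slope_def_field, diffQuot]

theorem abs_diffQuot_le {g : E → ℝ} {C : ℝ} (hg : Differentiable ℝ g)
    (hC : ∀ y, ‖fderiv ℝ g y‖ ≤ C) (v : E) (t : ℝ) (x : E) :
    |diffQuot g v t x| ≤ C * ‖v‖ := by
  rcases eq_or_ne t 0 with rfl | ht
  · simpa [diffQuot] using mul_nonneg ((norm_nonneg _).trans (hC x)) (norm_nonneg v)
  have hmvt := Convex.norm_image_sub_le_of_norm_fderiv_le (fun y _ => hg y) (fun y _ => hC y)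
    convex_univ (Set.mem_univ x) (Set.mem_univ (x + t • v))
  rw [add_sub_cancel_left, norm_smul, Real.norm_eq_abs] at hmvt
  rw [diffQuot, abs_div, div_le_iff₀ (abs_pos.mpr ht)]
  calc |g (x + t • v) - g x| ≤ C * (|t| * ‖v‖) := hmvt
    _ = C * ‖v‖ * |t| := by ring

theorem diffQuot_eq_zero_of_notMem_cthickening {g : E → ℝ} {v x : E} {t : ℝ} (ht : |t| ≤ 1)
    (hx : x ∉ cthickening ‖v‖ (tsupport g)) : diffQuot g v t x = 0 := by
  have hgx : g x = 0 :=
    image_eq_zero_of_notMem_tsupport fun hmem => hx (self_subset_cthickening _ hmem)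
  have hgxt : g (x + t • v) = 0 := by
    refine image_eq_zero_of_notMem_tsupport fun hmem => hx ?_
    refine mem_cthickening_of_dist_le x _ _ _ hmem ?_
    rw [dist_self_add_right, norm_smul, Real.norm_eq_abs]
    exact mul_le_of_le_one_left (norm_nonneg v) ht
  simp [diffQuot, hgx, hgxt]

end DifferenceQuotient

section Translation

variable {E : Type*} [NormedAddCommGroup E] [MeasurableSpace E] [BorelSpace E] (μ : Measure E)
  [μ.IsAddRightInvariant] [IsFiniteMeasureOnCompacts μ]

theorem integral_sub_translate_mul {g k : E → ℝ} (hg : Continuous g) (hgs : HasCompactSupport g)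
    (hk : Continuous k) (a : E) :
    ∫ x, (g (x + a) - g x) * k x ∂μ = ∫ x, g x * (k (x - a) - k x) ∂μ := by
  have hint : ∀ b c, Integrable (fun x => g (x + b) * k (x + c)) μ := fun b c =>
    ((hg.comp (continuous_add_const b)).mul (hk.comp (continuous_add_const c))
      ).integrable_of_hasCompactSupport (hgs.comp_homeomorph (Homeomorph.addRight b)).mul_right
  have hshift : ∫ x, g (x + a) * k x ∂μ = ∫ x, g x * k (x - a) ∂μ := by
    rw [← integral_add_right_eq_self (fun x => g x * k (x - a)) a]
    simp
  simp only [sub_mul, mul_sub]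
  rw [integral_sub (by simpa using hint a 0) (by simpa using hint 0 0),
    integral_sub (by simpa [sub_eq_add_neg] using hint 0 (-a)) (by simpa using hint 0 0), hshift]

/-- Integrating by parts discretely, both sides become
`∫ x, g x * (h (x - a + b) - h (x - a) - h (x + b) + h x) ∂μ`. -/
theorem integral_translate_sub_mul_translate_sub {g h : E → ℝ} (hg : Continuous g)
    (hgs : HasCompactSupport g) (hh : Continuous h) (a b : E) :
    ∫ x, (g (x + a) - g x) * (h (x + b) - h x) ∂μ
      = ∫ x, (g (x - b) - g x) * (h (x - a) - h x) ∂μ := by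
  simp only [sub_eq_add_neg _ b]
  rw [integral_sub_translate_mul μ (k := fun x => h (x + b) - h x) hg hgs (by fun_prop),
    integral_sub_translate_mul μ (k := fun x => h (x - a) - h x) hg hgs (by fun_prop)]
  congr 1
  ext x
  simp only [sub_neg_eq_add, sub_add_eq_add_sub]
  ring

variable [NormedSpace ℝ E]

theorem integral_diffQuot_mul_diffQuot_symm {g h : E → ℝ} (hg : Continuous g)
    (hgs : HasCompactSupport g) (hh : Continuous h) (v w : E) (t : ℝ) :
    ∫ x, diffQuot g v t x * diffQuot h w t x ∂μ
      = ∫ x, diffQuot g w (-t) x * diffQuot h v (-t) x ∂μ := by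
  have hquot : ∀ (s : ℝ) (p q : E) x, diffQuot g p s x * diffQuot h q s x
      = (g (x + s • p) - g x) * (h (x + s • q) - h x) / s ^ 2 := fun s p q x => by
    rw [diffQuot, diffQuot, div_mul_div_comm, sq]
  simp only [hquot, integral_div, neg_sq, neg_smul, ← sub_eq_add_neg]
  rw [integral_translate_sub_mul_translate_sub μ hg hgs hh]

end Translation

section Symmetry

variable {E : Type*} [NormedAddCommGroup E] [NormedSpace ℝ E] [ProperSpace E] [MeasurableSpace E]
  [BorelSpace E] (μ : Measure E) [IsFiniteMeasureOnCompacts μ]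

theorem tendsto_integral_diffQuot_mul_diffQuot {g h : E → ℝ} (hg : ContDiff ℝ 1 g)
    (hgs : HasCompactSupport g) (hh : ContDiff ℝ 1 h) (hhs : HasCompactSupport h) (v w : E) :
    Tendsto (fun t => ∫ x, diffQuot g v t x * diffQuot h w t x ∂μ) (𝓝[≠] 0)
      (𝓝 (∫ x, fderiv ℝ g x v * fderiv ℝ h x w ∂μ)) := by
  obtain ⟨Cg, hCg⟩ := hgs.fderiv (𝕜 := ℝ) |>.exists_bound_of_continuous
    (hg.continuous_fderiv one_ne_zero)
  obtain ⟨Ch, hCh⟩ := hhs.fderiv (𝕜 := ℝ) |>.exists_bound_of_continuous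
    (hh.continuous_fderiv one_ne_zero)
  set K := cthickening ‖v‖ (tsupport g)
  have hdiff_g := hg.differentiable one_ne_zero
  have hdiff_h := hh.differentiable one_ne_zero
  refine tendsto_integral_filter_of_dominated_convergence
    (K.indicator fun _ => Cg * ‖v‖ * (Ch * ‖w‖)) ?_ ?_ ?_ ?_
  · refine Eventually.of_forall fun t => Continuous.aestronglyMeasurable ?_
    unfold diffQuot
    fun_prop
  · filter_upwards [nhdsWithin_le_nhds (closedBall_mem_nhds (0 : ℝ) one_pos)] with t ht
    refine Eventually.of_forall fun x => ?_
    by_cases hx : x ∈ K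
    · rw [Set.indicator_of_mem hx, Real.norm_eq_abs, abs_mul]
      have hg_le := abs_diffQuot_le hdiff_g hCg v t x
      exact mul_le_mul hg_le (abs_diffQuot_le hdiff_h hCh w t x) (abs_nonneg _)
        ((abs_nonneg _).trans hg_le)
    · have ht1 : |t| ≤ 1 := by simpa using ht
      simp [hx, diffQuot_eq_zero_of_notMem_cthickening ht1 hx]
  · exact (integrable_indicator_iff isClosed_cthickening.measurableSet).mpr
      (integrableOn_const (hgs.isCompact.cthickening.measure_lt_top.ne))
  · exact Eventually.of_forall fun x =>
      (tendsto_diffQuot (hdiff_g x) v).mul (tendsto_diffQuot (hdiff_h x) w)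

variable [μ.IsAddRightInvariant]

theorem integral_fderiv_mul_fderiv_comm {g h : E → ℝ} (hg : ContDiff ℝ 1 g)
    (hgs : HasCompactSupport g) (hh : ContDiff ℝ 1 h) (hhs : HasCompactSupport h) (v w : E) :
    ∫ x, fderiv ℝ g x v * fderiv ℝ h x w ∂μ = ∫ x, fderiv ℝ g x w * fderiv ℝ h x v ∂μ := by
  have hneg : Tendsto (fun t : ℝ => -t) (𝓝[≠] 0) (𝓝[≠] 0) := by
    simpa using continuous_neg.continuousWithinAt.tendsto_nhdsWithin
      (x := (0 : ℝ)) (s := {0}ᶜ) (t := {0}ᶜ) fun t ht => neg_ne_zero.mpr ht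
  refine tendsto_nhds_unique (tendsto_integral_diffQuot_mul_diffQuot μ hg hgs hh hhs v w) ?_
  refine ((tendsto_integral_diffQuot_mul_diffQuot μ hg hgs hh hhs w v).comp hneg).congr
    fun t => ?_
  exact (integral_diffQuot_mul_diffQuot_symm μ hg.continuous hgs hh.continuous v w t).symm

end Symmetry

section Jacobian

variable {u : R3 → R3}

theorem jac_eq_zero_of_notMem_tsupport {x : R3} (hx : x ∉ tsupport u) : jac u x = 0 := by
  have hfd : ∀ i, fderiv ℝ (fun y => u y i) x = 0 := fun i =>
    fderiv_of_notMem_tsupport ℝ fun hmem =>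
      hx (tsupport_comp_subset (g := fun v : R3 => v i) rfl u hmem)
  ext i j
  simp [jac, pd, hfd]

theorem continuous_jac (hu : ContDiff ℝ 1 u) : Continuous (jac u) :=
  continuous_pi fun i => continuous_pi fun _ =>
    (contDiff_pi.mp hu i |>.continuous_fderiv one_ne_zero).clm_apply continuous_const

theorem hasCompactSupport_jac (hus : HasCompactSupport u) : HasCompactSupport (jac u) :=
  HasCompactSupport.intro hus fun _ hx => jac_eq_zero_of_notMem_tsupport hx

theorem integrable_comp_jac (hu : ContDiff ℝ 1 u) (hus : HasCompactSupport u) {F : M3 → ℝ}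
    (hF : Continuous F) (hF0 : F 0 = 0) : Integrable fun x => F (jac u x) :=
  (hF.comp (continuous_jac hu)).integrable_of_hasCompactSupport
    ((hasCompactSupport_jac hus).comp_left hF0)

theorem integral_trM_jac_sq_eq_finner_transp (hu : ContDiff ℝ 1 u) (hus : HasCompactSupport u) :
    ∫ x, trM (jac u x) ^ 2 = ∫ x, finner (jac u x) (transp (jac u x)) := by
  have hint : ∀ i j k l : Fin 3, Integrable fun x => jac u x i j * jac u x k l := fun i j k l =>
    integrable_comp_jac hu hus (F := fun X => X i j * X k l) (by fun_prop) (by simp)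
  have hcomp : ∀ i, ContDiff ℝ 1 fun y => u y i := contDiff_pi.mp hu
  have hcompS : ∀ i, HasCompactSupport fun y => u y i := fun i =>
    hus.comp_left (g := fun v : R3 => v i) rfl
  simp only [sq, trM, finner, transp, Finset.sum_mul_sum]
  rw [integral_finsetSum _ fun i _ => integrable_finsetSum _ fun j _ => hint _ _ _ _,
    integral_finsetSum _ fun i _ => integrable_finsetSum _ fun j _ => hint _ _ _ _]
  refine Finset.sum_congr rfl fun i _ => ?_
  rw [integral_finsetSum _ fun j _ => hint _ _ _ _,
    integral_finsetSum _ fun j _ => hint _ _ _ _]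
  exact Finset.sum_congr rfl fun j _ =>
    integral_fderiv_mul_fderiv_comm volume (hcomp i) (hcompS i) (hcomp j) (hcompS j) _ _

end Jacobian

theorem fnormSq_eq_two_mul_fnormSq_devv_symMat (X : M3) :
    fnormSq X = 2 * fnormSq (devv (symMat X)) - trM X ^ 2 / 3
      + (trM X ^ 2 - finner X (transp X)) := by
  simp only [fnormSq, finner, devv, symMat, trM, idM, transp, Fin.sum_univ_three, ↓reduceIte,
    Fin.reduceEq]
  ring

theorem integral_fnormSq_jac_le {u : R3 → R3} (hu : ContDiff ℝ 1 u) (hus : HasCompactSupport u) :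
    ∫ x, fnormSq (jac u x) ≤ 2 * ∫ x, fnormSq (devv (symMat (jac u x))) := by
  have hdev := integrable_comp_jac hu hus (F := fun X => fnormSq (devv (symMat X)))
    (by unfold fnormSq finner devv symMat trM; fun_prop)
    (by simp [fnormSq, finner, devv, symMat, trM])
  have htr := integrable_comp_jac hu hus (F := fun X => trM X ^ 2)
    (by unfold trM; fun_prop) (by simp [trM])
  have hcross := integrable_comp_jac hu hus (F := fun X => finner X (transp X))
    (by unfold finner transp; fun_prop) (by simp [finner, transp])
  calc ∫ x, fnormSq (jac u x)
      = ∫ x, (2 * fnormSq (devv (symMat (jac u x))) - trM (jac u x) ^ 2 / 3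
          + (trM (jac u x) ^ 2 - finner (jac u x) (transp (jac u x)))) :=
        congrArg (integral volume) (funext fun x => fnormSq_eq_two_mul_fnormSq_devv_symMat _)
    _ = 2 * (∫ x, fnormSq (devv (symMat (jac u x)))) - (∫ x, trM (jac u x) ^ 2) / 3 := by
        rw [integral_add, integral_sub, integral_sub htr hcross, integral_const_mul, integral_div,
          ← integral_trM_jac_sq_eq_finner_transp hu hus]
        · ring
        exacts [hdev.const_mul 2, htr.div_const 3, (hdev.const_mul 2).sub (htr.div_const 3),
          htr.sub hcross]
    _ ≤ 2 * ∫ x, fnormSq (devv (symMat (jac u x))) :=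
        sub_le_self _ (div_nonneg (integral_nonneg fun x => sq_nonneg (trM (jac u x))) zero_le_three)

theorem stmt_5_general (Ω : Set R3) :
    ∃ C_DSG : ℝ, 0 < C_DSG ∧ ∀ u : R3 → R3, ContDiff ℝ 1 u → HasCompactSupport u → tsupport u ⊆ Ω →
      (∫ x in Ω, fnormSq (jac u x)) ≤ C_DSG * ∫ x in Ω, fnormSq (devv (symMat (jac u x))) := by
  refine ⟨2, two_pos, fun u hu hus hΩ => ?_⟩
  have hjac : ∀ x ∉ Ω, jac u x = 0 := fun x hx =>
    jac_eq_zero_of_notMem_tsupport fun hmem => hx (hΩ hmem)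
  rw [setIntegral_eq_integral_of_forall_compl_eq_zero fun x hx => by
      simp [hjac x hx, fnormSq, finner],
    setIntegral_eq_integral_of_forall_compl_eq_zero fun x hx => by
      simp [hjac x hx, fnormSq, finner, devv, symMat, trM]]
  exact integral_fnormSq_jac_le hu hus

/-- L² bound of ∇u by dev sym ∇u for compactly supported C¹ vector fields in Ω. -/
theorem stmt_5 (Ω : Set R3) (hΩo : IsOpen Ω) (hΩb : Bornology.IsBounded Ω) :
    ∃ C_DSG : ℝ, 0 < C_DSG ∧ ∀ u : R3 → R3, ContDiff ℝ 1 u → HasCompactSupport u → tsupport u ⊆ Ω →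
      (∫ x in Ω, fnormSq (jac u x)) ≤ C_DSG * ∫ x in Ω, fnormSq (devv (symMat (jac u x))) :=
  stmt_5_general Ω
end
end

section
/- Let α₁, α₂, α₃ ∈ ℝ. The following are equivalent: (a) α₁ = −α₂; (b) for every twice continuously differentiable matrix field P : ℝ³ → ℝ^{3×3} taking values in the symmetric matrices, the matrix Curl( α₁ · dev sym Curl P + α₂ · skew Curl P + α₃ · tr(Curl P) · 𝟙 )(x) is symmetric at every point x ∈ ℝ³. -/
/-!
For symmetric `P` the trace of `Curl P` vanishes (it is `ε_{ijk} ∂_j P_{ik}`), so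
`dev sym Curl P = sym Curl P`, and for `α₂ = -α₁` the stress is `α₁ (Curl P)ᵀ`. Its Curl is
`α₁ inc P`, whose entries `ε_{jcd} ε_{iab} ∂_c ∂_a P_{db}` are symmetric in `i, j` by the symmetry
of `P` and of second derivatives (Schwarz).

Conversely, `P = x₁ x₂ e₁ ⊗ e₁` has `Curl P = -x₁ e₁ ⊗ e₃`; the Curl of the resulting stress has
`(1,2)` entry `(α₁ + α₂)/2` but `(2,1)` entry `0` (entries `0 1` and `1 0` with the 0-based
indices of the code).
-/

open MeasureTheory

noncomputable section

lemma pd_const (c : ℝ) (j : Fin 3) (x : R3) : pd j (fun _ => c) x = 0 := by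
  simp [pd]

lemma pd_coord (j k : Fin 3) (x : R3) : pd j (fun y => y k) x = if j = k then 1 else 0 := by
  simp [pd, fderiv_apply, Pi.single_apply, eq_comm]

lemma pd_const_mul (c : ℝ) (f : R3 → ℝ) (j : Fin 3) (x : R3) :
    pd j (fun y => c * f y) x = c * pd j f x := by
  change fderiv ℝ (c • f) x _ = _
  simp [fderiv_const_smul_field, pd]

lemma pd_sub {f g : R3 → ℝ} {x : R3} (hf : DifferentiableAt ℝ f x)
    (hg : DifferentiableAt ℝ g x) (j : Fin 3) :
    pd j (fun y => f y - g y) x = pd j f x - pd j g x := by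
  simp [pd, fderiv_fun_sub hf hg]

lemma pd_mul {f g : R3 → ℝ} {x : R3} (hf : DifferentiableAt ℝ f x)
    (hg : DifferentiableAt ℝ g x) (j : Fin 3) :
    pd j (fun y => f y * g y) x = f x * pd j g x + g x * pd j f x := by
  simp [pd, fderiv_fun_mul hf hg]

lemma differentiable_pd {f : R3 → ℝ} (hf : ContDiff ℝ 2 f) (j : Fin 3) :
    Differentiable ℝ (pd j f) :=
  ((hf.fderiv_right le_rfl).clm_apply contDiff_const).differentiable one_ne_zero

lemma pd_pd_comm {f : R3 → ℝ} (hf : ContDiff ℝ 2 f) (i j : Fin 3) (x : R3) :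
    pd i (pd j f) x = pd j (pd i f) x := by
  have hf' : DifferentiableAt ℝ (fderiv ℝ f) x :=
    (hf.fderiv_right le_rfl).differentiable one_ne_zero x
  have hsnd : ∀ v w : R3, fderiv ℝ (fun y => fderiv ℝ f y v) x w = fderiv ℝ (fderiv ℝ f) x w v :=
    fun v w => by simp [fderiv_clm_apply hf' (differentiableAt_const v)]
  change fderiv ℝ (fun y => fderiv ℝ f y _) x _ = fderiv ℝ (fun y => fderiv ℝ f y _) x _
  rw [hsnd, hsnd]
  exact (hf.contDiffAt.isSymmSndFDerivAt (by simp)) _ _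

lemma curlM_apply_zero (P : R3 → M3) (x : R3) (i : Fin 3) :
    CurlM P x i 0 = pd 1 (fun y => P y i 2) x - pd 2 (fun y => P y i 1) x := rfl

lemma curlM_apply_one (P : R3 → M3) (x : R3) (i : Fin 3) :
    CurlM P x i 1 = pd 2 (fun y => P y i 0) x - pd 0 (fun y => P y i 2) x := rfl

lemma curlM_apply_two (P : R3 → M3) (x : R3) (i : Fin 3) :
    CurlM P x i 2 = pd 0 (fun y => P y i 1) x - pd 1 (fun y => P y i 0) x := rfl

lemma curlM_const_mul (c : ℝ) (P : R3 → M3) (x : R3) :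
    CurlM (fun y i j => c * P y i j) x = fun i j => c * CurlM P x i j := by
  ext i j
  fin_cases j <;>
    simp only [Fin.zero_eta, Fin.mk_one, Fin.reduceFinMk, curlM_apply_zero, curlM_apply_one,
      curlM_apply_two, pd_const_mul, mul_sub]

lemma trM_curlM_eq_zero {P : R3 → M3} (hP : ∀ y, isSymmM (P y)) (x : R3) :
    trM (CurlM P x) = 0 := by
  have hsymm : ∀ i j, (fun y => P y i j) = fun y => P y j i := fun i j => funext fun y => hP y i j
  simp only [trM, Fin.sum_univ_three, curlM_apply_zero, curlM_apply_one, curlM_apply_two,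
    hsymm 1 0, hsymm 2 0, hsymm 2 1]
  ring

lemma isSymmM_curlM_transp_curlM {P : R3 → M3} (hP : ContDiff ℝ 2 P)
    (hsymm : ∀ y, isSymmM (P y)) (x : R3) :
    isSymmM (CurlM (fun y => transp (CurlM P y)) x) := by
  have hentry : ∀ u v, ContDiff ℝ 2 fun y => P y u v :=
    fun u v => contDiff_pi.mp (contDiff_pi.mp hP u) v
  have hsub : ∀ k a b u v u' v', pd k (fun y => pd a (fun z => P z u v) y
      - pd b (fun z => P z u' v') y) x = pd k (pd a fun z => P z u v) x
        - pd k (pd b fun z => P z u' v') x := fun k a b u v u' v' =>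
    pd_sub (differentiable_pd (hentry u v) a x) (differentiable_pd (hentry u' v') b x) k
  have hcomm : ∀ a b u v, pd a (pd b fun z => P z u v) x = pd b (pd a fun z => P z u v) x :=
    fun a b u v => pd_pd_comm (hentry u v) a b x
  have hsymm' : ∀ i j, (fun y => P y i j) = fun y => P y j i :=
    fun i j => funext fun y => hsymm y i j
  intro i j
  fin_cases i <;> fin_cases j <;>
    simp only [Fin.zero_eta, Fin.mk_one, Fin.reduceFinMk, transp, curlM_apply_zero,
      curlM_apply_one, curlM_apply_two, hsub, hsymm' 1 0, hsymm' 2 0, hsymm' 2 1,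
      hcomm 1 0, hcomm 2 0, hcomm 2 1] <;>
    ring

def momentStress (α₁ α₂ α₃ : ℝ) (X : M3) : M3 := fun i j =>
  α₁ * devv (symMat X) i j + α₂ * skeww X i j + α₃ * trM X * idM i j

lemma momentStress_neg_eq_transp (α₁ α₃ : ℝ) {X : M3} (hX : trM X = 0) :
    momentStress α₁ (-α₁) α₃ X = fun i j => α₁ * transp X i j := by
  have hsym : trM (symMat X) = 0 := by
    simp only [trM, symMat, Fin.sum_univ_three] at hX ⊢
    linarith
  ext i j
  simp only [momentStress, devv, symMat, skeww, transp, hX, hsym]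
  ring

def mixedMonomialField : R3 → M3 := fun y i j => if i = 0 ∧ j = 0 then y 0 * y 1 else 0

lemma contDiff_mixedMonomialField : ContDiff ℝ 2 mixedMonomialField := by
  refine contDiff_pi.mpr fun i => contDiff_pi.mpr fun j => ?_
  unfold mixedMonomialField
  split_ifs
  · exact (contDiff_apply ℝ ℝ 0).mul (contDiff_apply ℝ ℝ 1)
  · exact contDiff_const

lemma isSymmM_mixedMonomialField (y : R3) : isSymmM (mixedMonomialField y) := by
  intro i j
  simp only [mixedMonomialField, and_comm]

lemma curlM_mixedMonomialField (y : R3) :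
    CurlM mixedMonomialField y = fun i j => if i = 0 ∧ j = 2 then -y 0 else 0 := by
  have hd : ∀ k : Fin 3, DifferentiableAt ℝ (fun z : R3 => z k) y :=
    fun k => (differentiable_apply k) y
  ext i j
  fin_cases i <;> fin_cases j <;>
    simp [mixedMonomialField, curlM_apply_zero, curlM_apply_one, curlM_apply_two, pd_const,
      pd_mul (hd 0) (hd 1), pd_coord]

lemma momentStress_curlM_mixedMonomialField (α₁ α₂ α₃ : ℝ) (y : R3) :
    momentStress α₁ α₂ α₃ (CurlM mixedMonomialField y) = fun i j =>
      if i = 0 ∧ j = 2 then -(α₁ + α₂) / 2 * y 0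
      else if i = 2 ∧ j = 0 then (α₂ - α₁) / 2 * y 0 else 0 := by
  ext i j
  fin_cases i <;> fin_cases j <;>
    simp [momentStress, curlM_mixedMonomialField, devv, symMat, skeww, trM, idM,
      Fin.sum_univ_three] <;>
    ring

lemma curlM_momentStress_mixedMonomialField_zero_one (α₁ α₂ α₃ : ℝ) (x : R3) :
    CurlM (fun y => momentStress α₁ α₂ α₃ (CurlM mixedMonomialField y)) x 0 1
      = (α₁ + α₂) / 2 := by
  simp [curlM_apply_one, momentStress_curlM_mixedMonomialField, pd_const, pd_const_mul, pd_coord]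
  ring

lemma curlM_momentStress_mixedMonomialField_one_zero (α₁ α₂ α₃ : ℝ) (x : R3) :
    CurlM (fun y => momentStress α₁ α₂ α₃ (CurlM mixedMonomialField y)) x 1 0 = 0 := by
  simp [curlM_apply_zero, momentStress_curlM_mixedMonomialField, pd_const]

/-- for symmetric-valued P, symmetry of Curl of the isotropic moment
stress holds for all such P iff α₁ = −α₂. -/
theorem stmt_9 (α₁ α₂ α₃ : ℝ) :
    α₁ = -α₂ ↔
      (∀ P : R3 → M3, ContDiff ℝ 2 P → (∀ x, isSymmM (P x)) →
        ∀ x : R3, isSymmM (CurlM (fun y => fun i j =>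
          α₁ * devv (symMat (CurlM P y)) i j + α₂ * skeww (CurlM P y) i j
            + α₃ * trM (CurlM P y) * idM i j) x)) := by
  change α₁ = -α₂ ↔ ∀ P : R3 → M3, ContDiff ℝ 2 P → (∀ x, isSymmM (P x)) →
    ∀ x, isSymmM (CurlM (fun y => momentStress α₁ α₂ α₃ (CurlM P y)) x)
  constructor
  · intro h P hP hsymm x
    obtain rfl : α₂ = -α₁ := by linarith
    have hstress : (fun y => momentStress α₁ (-α₁) α₃ (CurlM P y))
        = fun y i j => α₁ * transp (CurlM P y) i j :=
      funext fun y => momentStress_neg_eq_transp α₁ α₃ (trM_curlM_eq_zero hsymm y)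
    intro i j
    rw [hstress, curlM_const_mul]
    exact congrArg _ (isSymmM_curlM_transp_curlM hP hsymm x i j)
  · intro h
    have h01 := h _ contDiff_mixedMonomialField isSymmM_mixedMonomialField 0 0 1
    rw [curlM_momentStress_mixedMonomialField_zero_one,
      curlM_momentStress_mixedMonomialField_one_zero] at h01
    linarith
end
end
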